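/- Let f : (Fin 30 → ℝ) → ℝ be the first modified Griewank function f(x) = (1/4000)·∑_{n=1}^{30} x_n² - ∏_{n=1}^{30} (2/3 + (1/3)·cos(x_n/√n)) + 1. Then f(x) ≥ 0 for all x ∈ ℝ³⁰, and f(0) = 0, so the origin is a global minimum point of f with minimum value 0. -/
import Mathlib


open Real Finset

/-- The first modified Griewank function on ℝ³⁰:
`f(x) = (1/4000) ∑ x_n² - ∏ (2/3 + (1/3) cos(x_n/√n)) + 1`,
with `Fin 30` index `n` corresponding to the coordinate `n+1`. -/
noncomputable def griewankMod1 (x : Fin 30 → ℝ) : ℝ :=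
  (1 / 4000) * ∑ n : Fin 30, (x n) ^ 2 -
    ∏ n : Fin 30, (2 / 3 + (1 / 3) * Real.cos (x n / Real.sqrt ((n : ℝ) + 1))) + 1

theorem griewankMod1_global_min :
    (∀ x : Fin 30 → ℝ, 0 ≤ griewankMod1 x) ∧ griewankMod1 0 = 0 := by
  constructor
  · intro x
    unfold griewankMod1
    have hsum : (0:ℝ) ≤ ∑ n : Fin 30, (x n) ^ 2 :=
      Finset.sum_nonneg fun n _ => sq_nonneg _
    have hprod : ∏ n : Fin 30, (2 / 3 + (1 / 3) * Real.cos (x n / Real.sqrt ((n : ℝ) + 1))) ≤ 1 := by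
      apply Finset.prod_le_one
      · intro n _
        have := Real.neg_one_le_cos (x n / Real.sqrt ((n : ℝ) + 1))
        nlinarith
      · intro n _
        have := Real.cos_le_one (x n / Real.sqrt ((n : ℝ) + 1))
        nlinarith
    nlinarith
  · unfold griewankMod1
    norm_num
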